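/- Let E₁ and E₂ be symmetric positive definite k×k real matrices and |r| = 1. Then the block matrix R = [[E₁, r√(E₁E₂)],[r(√(E₁E₂))ᵀ, E₂]] has determinant zero. -/

import Mathlib

open Matrix

/-- The square root of a positive semidefinite matrix, as defined in the older Mathlib
(`Matrix.PosSemidef.sqrt`, since removed). -/
noncomputable def Matrix.PosSemidef.sqrt {n : Type*} [Fintype n] [DecidableEq n]
    {A : Matrix n n ℝ} (hA : A.PosSemidef) : Matrix n n ℝ :=
  (hA.1.eigenvectorUnitary : Matrix n n ℝ) * diagonal (Real.sqrt ∘ hA.1.eigenvalues) *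
    (star (hA.1.eigenvectorUnitary : Matrix n n ℝ))

/-- The principal square root of `E₁ * E₂` for positive definite `E₁, E₂`:
`E₁^{1/2} · (E₁^{1/2} E₂ E₁^{1/2})^{1/2} · E₁^{-1/2}`. -/
noncomputable def principalSqrtMul {k : ℕ} {E₁ E₂ : Matrix (Fin k) (Fin k) ℝ}
    (h₁ : E₁.PosDef) (h₂ : E₂.PosDef) : Matrix (Fin k) (Fin k) ℝ :=
  h₁.posSemidef.sqrt *
    (h₂.posSemidef.mul_mul_conjTranspose_same h₁.posSemidef.sqrt).sqrt *
    h₁.posSemidef.sqrt⁻¹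

/-!
With `s = E₁^{1/2}` and `b = (s E₂ s)^{1/2}`, both symmetric, `√(E₁E₂) = S = s b s⁻¹`.
Since `s⁻¹ E₂⁻¹ s⁻¹ = (s E₂ s)⁻¹ = b⁻²`, we get `S E₂⁻¹ Sᵀ = s b b⁻² b s = s² = E₁`, so for
`r² = 1` the Schur complement `E₁ - r² S E₂⁻¹ Sᵀ` of `E₂` in `R` vanishes.
-/

theorem Matrix.PosSemidef.sqrt_mul_self {n : Type*} [Fintype n] [DecidableEq n]
    {A : Matrix n n ℝ} (hA : A.PosSemidef) : hA.sqrt * hA.sqrt = A := by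
  set U : Matrix n n ℝ := (hA.1.eigenvectorUnitary : Matrix n n ℝ)
  set D := diagonal (Real.sqrt ∘ hA.1.eigenvalues)
  have hUU : star U * U = 1 := Unitary.coe_star_mul_self _
  have hDD : D * D = diagonal (RCLike.ofReal ∘ hA.1.eigenvalues) := by
    rw [diagonal_mul_diagonal]
    congr 1
    funext i
    simp [Real.mul_self_sqrt (hA.eigenvalues_nonneg i)]
  calc hA.sqrt * hA.sqrt = U * D * (star U * U) * D * star U := by
        simp only [sqrt, Matrix.mul_assoc]; rfl
    _ = A := by
      conv_rhs => rw [hA.1.spectral_theorem, Unitary.conjStarAlgAut_apply]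
      rw [hUU, Matrix.mul_one, Matrix.mul_assoc U, hDD]

theorem Matrix.PosSemidef.transpose_sqrt {n : Type*} [Fintype n] [DecidableEq n]
    {A : Matrix n n ℝ} (hA : A.PosSemidef) : hA.sqrtᵀ = hA.sqrt :=
  ((posSemidef_diagonal_iff.2 fun _ => Real.sqrt_nonneg _).mul_mul_conjTranspose_same _).1

theorem Matrix.conj_mul_inv_mul_transpose_conj {n α : Type*} [Fintype n] [DecidableEq n]
    [CommRing α]
    {s b E : Matrix n n α} (hs : IsUnit s) (hE : IsUnit E) (hsT : sᵀ = s) (hbT : bᵀ = b)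
    (hbb : b * b = s * E * s) :
    s * b * s⁻¹ * E⁻¹ * (s * b * s⁻¹)ᵀ = s * s := by
  have hb : IsUnit b.det := (isUnit_iff_isUnit_det b).1 <|
    isUnit_mul_self_iff.1 (hbb ▸ (hs.mul hE).mul hs)
  have hinv : s⁻¹ * E⁻¹ * s⁻¹ = b⁻¹ * b⁻¹ := by
    rw [← mul_inv_rev, ← mul_inv_rev, ← Matrix.mul_assoc, ← hbb, mul_inv_rev]
  calc s * b * s⁻¹ * E⁻¹ * (s * b * s⁻¹)ᵀ = s * (b * (s⁻¹ * E⁻¹ * s⁻¹) * b) * s := by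
        simp only [transpose_mul, transpose_nonsing_inv, hsT, hbT, Matrix.mul_assoc]
    _ = s * s := by
      rw [hinv, ← Matrix.mul_assoc b, mul_nonsing_inv b hb, Matrix.one_mul, nonsing_inv_mul b hb,
        Matrix.mul_one]

theorem Matrix.det_fromBlocks_eq_zero_of_mul_invOf_mul_eq {m n α : Type*} [Fintype m] [Fintype n]
    [DecidableEq m] [DecidableEq n] [CommRing α] [Nonempty m] {A : Matrix m m α}
    {B : Matrix m n α} {C : Matrix n m α} {D : Matrix n n α} [Invertible D]
    (h : B * ⅟D * C = A) : (fromBlocks A B C D).det = 0 := by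
  rw [det_fromBlocks₂₂, h, sub_self, det_zero, mul_zero]

/-- If `|r| = 1` then `R = [[E₁, r√(E₁E₂)], [r(√(E₁E₂))ᵀ, E₂]]` has determinant zero. -/
theorem pairwise_block_det_zero (k : ℕ) (hk : 0 < k)
    (E₁ E₂ : Matrix (Fin k) (Fin k) ℝ)
    (h₁ : E₁.PosDef) (h₂ : E₂.PosDef) (r : ℝ) (hr : |r| = 1) :
    (Matrix.fromBlocks E₁ (r • principalSqrtMul h₁ h₂)
        (r • (principalSqrtMul h₁ h₂)ᵀ) E₂).det = 0 := by
  have : Nonempty (Fin k) := ⟨⟨0, hk⟩⟩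
  have : Invertible E₂ := h₂.isUnit.invertible
  have hss : h₁.posSemidef.sqrt * h₁.posSemidef.sqrt = E₁ := h₁.posSemidef.sqrt_mul_self
  have hbb := (h₂.posSemidef.mul_mul_conjTranspose_same h₁.posSemidef.sqrt).sqrt_mul_self.trans
    (by rw [conjTranspose_eq_transpose_of_trivial, h₁.posSemidef.transpose_sqrt])
  have hschur : principalSqrtMul h₁ h₂ * E₂⁻¹ * (principalSqrtMul h₁ h₂)ᵀ = E₁ :=
    (conj_mul_inv_mul_transpose_conj (isUnit_mul_self_iff.1 (hss.symm ▸ h₁.isUnit)) h₂.isUnit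
      h₁.posSemidef.transpose_sqrt (PosSemidef.transpose_sqrt _) hbb).trans hss
  have hr2 : r * r = 1 := by rw [← abs_mul_abs_self, hr, one_mul]
  refine det_fromBlocks_eq_zero_of_mul_invOf_mul_eq ?_
  rw [invOf_eq_nonsing_inv, Matrix.smul_mul, Matrix.smul_mul, Matrix.mul_smul, smul_smul, hr2,
    one_smul, hschur]
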